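/- For all real x with 0 < x < 2, 4(arcsin(x/2))^2 / √(4−x^2) = ∑_{k=1}^∞ (x/2)^{2k} · (1/2)_k / (1)_k · (4 H_{2k}^{(2)} − H_k^{(2)}). -/

import Mathlib

/-
With `y = x / 2` and `F q y = ∑ q k y^(2k)`, a coefficient recurrence
`(2k+2) q (k+1) = (2k+1) q k + r k` is the differential equation
`(1 - y²) F' - y F = ∑ r k y^(2k+1)`, i.e.
`(F √(1 - y²))' = (∑ r k y^(2k+1)) / √(1 - y²)`.
For `q k = (1/2)_k / k!` and `r = 0` this gives `F q = 1 / √(1 - y²)`, whose termwise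
antiderivative `∑ q k y^(2k+1) / (2k+1)` is therefore `arcsin y`. For
`q k = (1/2)_k / k! · (4 H_{2k}^{(2)} - H_k^{(2)})` the recurrence holds with
`r k = 4 (1/2)_k / (k! (2k+1))`, so `(F q · √(1 - y²))' = 4 arcsin y / √(1 - y²)`,
which is also the derivative of `2 arcsin² y`; both sides vanish at `0`.
-/

open Real

noncomputable def poch (x : ℝ) (k : ℕ) : ℝ := ∏ i ∈ Finset.range k, (x + i)

noncomputable def H2 (n : ℕ) : ℝ := ∑ j ∈ Finset.range n, 1 / ((j : ℝ) + 1) ^ 2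

open Set Finset Function

lemma poch_succ (x : ℝ) (k : ℕ) : poch x (k + 1) = poch x k * (x + k) :=
  prod_range_succ _ _

lemma poch_pos {x : ℝ} (hx : 0 < x) (k : ℕ) : 0 < poch x k :=
  prod_pos fun i _ => by positivity

lemma H2_succ (n : ℕ) : H2 (n + 1) = H2 n + 1 / ((n : ℝ) + 1) ^ 2 :=
  sum_range_succ _ _

lemma H2_nonneg (n : ℕ) : 0 ≤ H2 n :=
  sum_nonneg fun _ _ => by positivity

lemma H2_mono : Monotone H2 := fun _ _ h =>
  sum_le_sum_of_subset_of_nonneg (range_subset_range.2 h) fun _ _ _ => by positivity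

lemma H2_le_two (n : ℕ) : H2 n ≤ 2 := by
  have hzeta : HasSum (fun j : ℕ => 1 / ((j : ℝ) + 1) ^ 2) (π ^ 2 / 6) := by
    simpa using (hasSum_nat_add_iff' 1).mpr hasSum_zeta_two
  calc H2 n ≤ π ^ 2 / 6 := sum_le_hasSum _ (fun _ _ => by positivity) hzeta
    _ ≤ 2 := by nlinarith [pi_pos, pi_lt_d2]

-- Coefficients of `1 / √(1 - y²)`, `arcsin y` and `2 arcsin² y / √(1 - y²)`
-- at `y ^ (2 * k)`, `y ^ (2 * k + 1)` and `y ^ (2 * k)` respectively.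
noncomputable def invSqrtCoeff (k : ℕ) : ℝ := poch (1 / 2) k / poch 1 k

noncomputable def arcsinCoeff (k : ℕ) : ℝ := invSqrtCoeff k / (2 * k + 1)

noncomputable def arcsinSqCoeff (k : ℕ) : ℝ := invSqrtCoeff k * (4 * H2 (2 * k) - H2 k)

lemma invSqrtCoeff_zero : invSqrtCoeff 0 = 1 := by
  simp [invSqrtCoeff, poch]

lemma invSqrtCoeff_pos (k : ℕ) : 0 < invSqrtCoeff k :=
  div_pos (poch_pos (by norm_num) k) (poch_pos one_pos k)

lemma invSqrtCoeff_recurrence (k : ℕ) :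
    (2 * k + 2) * invSqrtCoeff (k + 1) = (2 * k + 1) * invSqrtCoeff k := by
  have := (poch_pos one_pos k).ne'
  have : (1 : ℝ) + k ≠ 0 := by positivity
  simp only [invSqrtCoeff, poch_succ]
  field_simp
  ring

lemma invSqrtCoeff_le_one (k : ℕ) : invSqrtCoeff k ≤ 1 := by
  induction k with
  | zero => rw [invSqrtCoeff_zero]
  | succ k ih =>
    have := invSqrtCoeff_recurrence k
    nlinarith [invSqrtCoeff_pos k, invSqrtCoeff_pos (k + 1)]

lemma abs_invSqrtCoeff_le (k : ℕ) : |invSqrtCoeff k| ≤ 1 := by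
  rw [abs_of_pos (invSqrtCoeff_pos k)]
  exact invSqrtCoeff_le_one k

lemma abs_arcsinCoeff_le (k : ℕ) : |arcsinCoeff k| ≤ 1 := by
  rw [arcsinCoeff, abs_div, abs_of_pos (by positivity : (0 : ℝ) < 2 * k + 1),
    div_le_one (by positivity)]
  linarith [abs_invSqrtCoeff_le k, (Nat.cast_nonneg k : (0 : ℝ) ≤ k)]

lemma abs_arcsinSqCoeff_le (k : ℕ) : |arcsinSqCoeff k| ≤ 8 := by
  have hH : H2 k ≤ H2 (2 * k) := H2_mono (by omega)
  have hw : 0 ≤ 4 * H2 (2 * k) - H2 k := by linarith [H2_nonneg k]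
  rw [arcsinSqCoeff, abs_mul, abs_of_nonneg hw]
  calc |invSqrtCoeff k| * (4 * H2 (2 * k) - H2 k) ≤ 1 * 8 :=
        mul_le_mul (abs_invSqrtCoeff_le k) (by linarith [H2_le_two (2 * k), H2_nonneg k]) hw
          zero_le_one
    _ = 8 := one_mul 8

lemma arcsinSqCoeff_zero : arcsinSqCoeff 0 = 0 := by
  simp [arcsinSqCoeff, H2]

lemma arcsinSqCoeff_recurrence (k : ℕ) :
    (2 * k + 2) * arcsinSqCoeff (k + 1) = (2 * k + 1) * arcsinSqCoeff k + 4 * arcsinCoeff k := by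
  have hH : 4 * H2 (2 * (k + 1)) - H2 (k + 1)
      = 4 * H2 (2 * k) - H2 k + 4 / (2 * (k : ℝ) + 1) ^ 2 := by
    rw [show 2 * (k + 1) = 2 * k + 1 + 1 by ring, H2_succ, H2_succ, H2_succ]
    push_cast
    field_simp
    ring
  have : (2 * (k : ℝ) + 1) ≠ 0 := by positivity
  simp only [arcsinSqCoeff, arcsinCoeff, hH]
  rw [← mul_assoc, invSqrtCoeff_recurrence]
  field_simp

lemma summable_nat_mul_pow_sub_one {r : ℝ} (hr : |r| < 1) :
    Summable (fun n : ℕ => (n : ℝ) * r ^ (n - 1)) := by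
  rw [← summable_nat_add_iff 1]
  have h := summable_pow_mul_geometric_of_norm_lt_one 1 (by rwa [Real.norm_eq_abs] : ‖r‖ < 1)
  refine (h.add (summable_geometric_of_abs_lt_one hr)).congr fun n => ?_
  simp only [Nat.add_sub_cancel, pow_one, Nat.cast_add, Nat.cast_one]
  ring

section InjectiveExponents

variable {q : ℕ → ℝ} {C : ℝ} {m : ℕ → ℕ}

lemma summable_mul_pow_comp (hq : ∀ k, |q k| ≤ C) (hm : Injective m) {y : ℝ} (hy : |y| < 1) :
    Summable (fun k => q k * y ^ m k) := by
  have hg := ((summable_geometric_of_abs_lt_one (by rwa [abs_abs])).comp_injective hm).mul_left C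
  refine hg.of_norm_bounded fun k => ?_
  rw [norm_mul, norm_pow, Real.norm_eq_abs]
  exact mul_le_mul_of_nonneg_right (hq k) (by positivity)

lemma summable_mul_deriv_pow_comp (hq : ∀ k, |q k| ≤ C) (hm : Injective m) {y : ℝ}
    (hy : |y| < 1) : Summable (fun k => q k * (m k * y ^ (m k - 1))) := by
  have hg := ((summable_nat_mul_pow_sub_one (by rwa [abs_abs])).comp_injective hm).mul_left C
  refine hg.of_norm_bounded fun k => ?_
  rw [norm_mul, norm_mul, norm_pow, Real.norm_eq_abs, Real.norm_eq_abs, Nat.abs_cast]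
  exact mul_le_mul_of_nonneg_right (hq k) (by positivity)

lemma hasDerivAt_tsum_mul_pow_comp (hq : ∀ k, |q k| ≤ C) (hm : Injective m) {y : ℝ}
    (hy : |y| < 1) :
    HasDerivAt (fun z => ∑' k, q k * z ^ m k) (∑' k, q k * (m k * y ^ (m k - 1))) y := by
  obtain ⟨ρ, hyρ, hρ⟩ := exists_between hy
  have hρ0 : 0 < ρ := (abs_nonneg y).trans_lt hyρ
  refine hasDerivAt_tsum_of_isPreconnected
    (((summable_nat_mul_pow_sub_one (by rwa [abs_of_pos hρ0])).comp_injective hm).mul_left C)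
    Metric.isOpen_ball (convex_ball 0 ρ).isPreconnected
    (fun k z _ => (hasDerivAt_pow (m k) z).const_mul (q k)) (fun k z hz => ?_)
    (Metric.mem_ball_self hρ0) (summable_mul_pow_comp hq hm (by simp))
    (by rwa [mem_ball_zero_iff, Real.norm_eq_abs])
  rw [mem_ball_zero_iff, Real.norm_eq_abs] at hz
  rw [norm_mul, norm_mul, norm_pow, Real.norm_eq_abs, Real.norm_eq_abs, Nat.abs_cast]
  have hC : 0 ≤ C := (abs_nonneg _).trans (hq 0)
  exact mul_le_mul (hq k) (mul_le_mul_of_nonneg_left (pow_le_pow_left₀ (abs_nonneg z) hz.le _)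
    (Nat.cast_nonneg _)) (by positivity) hC

end InjectiveExponents

lemma hasDerivAt_sqrt_one_sub_sq {y : ℝ} (hy : |y| < 1) :
    HasDerivAt (fun z => √(1 - z ^ 2)) (-y / √(1 - y ^ 2)) y := by
  have hpos : 0 < 1 - y ^ 2 := by nlinarith [abs_lt.mp hy]
  convert ((hasDerivAt_pow 2 y).const_sub 1).sqrt hpos.ne' using 1
  field_simp
  ring

section EvenSeries

variable {q r : ℕ → ℝ} {C : ℝ}

lemma one_sub_sq_mul_deriv_evenSeries (hq : ∀ k, |q k| ≤ C) (hr : ∀ k, |r k| ≤ C)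
    (hrec : ∀ k : ℕ, (2 * k + 2) * q (k + 1) = (2 * k + 1) * q k + r k)
    {y : ℝ} (hy : |y| < 1) :
    (1 - y ^ 2) * ∑' k, q k * ((2 * k : ℕ) * y ^ (2 * k - 1))
      = y * ∑' k, q k * y ^ (2 * k) + ∑' k, r k * y ^ (2 * k + 1) := by
  have hinj : Injective (2 * · : ℕ → ℕ) := fun a b h => by simp only at h; omega
  have hinj' : Injective (2 * · + 1 : ℕ → ℕ) := fun a b h => by simp only at h; omega
  set D := ∑' k, q k * ((2 * k : ℕ) * y ^ (2 * k - 1))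
  have hD : HasSum (fun k => ((2 * k + 1) * q k + r k) * y ^ (2 * k + 1)) D := by
    have h := (hasSum_nat_add_iff' 1).mpr (summable_mul_deriv_pow_comp hq hinj hy).hasSum
    simp only [Finset.range_one, sum_singleton, mul_zero, Nat.cast_zero, zero_mul,
      sub_zero] at h
    refine h.congr_fun fun k => ?_
    rw [show 2 * (k + 1) - 1 = 2 * k + 1 by omega, ← hrec]
    push_cast
    ring
  have hy2D : HasSum (fun k => 2 * k * q k * y ^ (2 * k + 1)) (y ^ 2 * D) := by
    rw [← hasSum_nat_add_iff' 1]
    simp only [Finset.range_one, sum_singleton, mul_zero, Nat.cast_zero, zero_mul, sub_zero]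
    refine (hD.mul_left (y ^ 2)).congr_fun fun k => ?_
    push_cast
    linear_combination y ^ (2 * k + 3) * hrec k
  have hsplit := (hy2D.add ((summable_mul_pow_comp hq hinj hy).hasSum.mul_left y)).add
    (summable_mul_pow_comp hr hinj' hy).hasSum
  have hDeq := hD.unique (hsplit.congr_fun fun k => by ring)
  linear_combination hDeq

lemma hasDerivAt_evenSeries_mul_sqrt (hq : ∀ k, |q k| ≤ C) (hr : ∀ k, |r k| ≤ C)
    (hrec : ∀ k : ℕ, (2 * k + 2) * q (k + 1) = (2 * k + 1) * q k + r k)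
    {y : ℝ} (hy : |y| < 1) :
    HasDerivAt (fun z => (∑' k, q k * z ^ (2 * k)) * √(1 - z ^ 2))
      ((∑' k, r k * y ^ (2 * k + 1)) / √(1 - y ^ 2)) y := by
  have hs : 0 < √(1 - y ^ 2) := sqrt_pos.mpr (by nlinarith [abs_lt.mp hy])
  have hs2 : √(1 - y ^ 2) ^ 2 = 1 - y ^ 2 := sq_sqrt (by nlinarith [abs_lt.mp hy])
  have hode := one_sub_sq_mul_deriv_evenSeries hq hr hrec hy
  refine ((hasDerivAt_tsum_mul_pow_comp hq (mul_right_injective₀ (two_ne_zero' ℕ)) hy).mul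
    (hasDerivAt_sqrt_one_sub_sq hy)).congr_deriv ?_
  rw [eq_div_iff hs.ne', add_mul, mul_assoc, ← sq, hs2, mul_assoc, div_mul_cancel₀ _ hs.ne']
  linear_combination hode

end EvenSeries

lemma eqOn_of_hasDerivAt_eq {f g d : ℝ → ℝ} {s : Set ℝ} (hs : IsOpen s)
    (hs' : IsPreconnected s)
    (hf : ∀ y ∈ s, HasDerivAt f (d y) y) (hg : ∀ y ∈ s, HasDerivAt g (d y) y) {x : ℝ}
    (hx : x ∈ s) (hfg : f x = g x) : EqOn f g s :=
  hs.eqOn_of_deriv_eq hs' (fun y hy => (hf y hy).differentiableAt.differentiableWithinAt)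
    (fun y hy => (hg y hy).differentiableAt.differentiableWithinAt)
    (fun y hy => (hf y hy).deriv.trans (hg y hy).deriv.symm) hx hfg

lemma tsum_mul_zero_pow_two_mul (q : ℕ → ℝ) : ∑' k, q k * (0 : ℝ) ^ (2 * k) = q 0 := by
  rw [tsum_eq_single 0 fun k hk => by simp [hk]]
  simp

lemma tsum_invSqrtCoeff_mul_sqrt {y : ℝ} (hy : |y| < 1) :
    (∑' k, invSqrtCoeff k * y ^ (2 * k)) * √(1 - y ^ 2) = 1 := by
  have key : EqOn (fun z => (∑' k, invSqrtCoeff k * z ^ (2 * k)) * √(1 - z ^ 2)) (fun _ => 1)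
      (Set.Ioo (-1) 1) := by
    refine eqOn_of_hasDerivAt_eq (d := 0) isOpen_Ioo isPreconnected_Ioo (fun z hz => ?_)
      (fun z _ => hasDerivAt_const z 1) (by norm_num : (0 : ℝ) ∈ Set.Ioo (-1) 1) ?_
    · simpa using hasDerivAt_evenSeries_mul_sqrt (r := 0) abs_invSqrtCoeff_le (by simp)
        (by simpa using invSqrtCoeff_recurrence) (abs_lt.mpr hz)
    · simp [tsum_mul_zero_pow_two_mul, invSqrtCoeff_zero]
  exact key (abs_lt.mp hy)

lemma tsum_arcsinCoeff {y : ℝ} (hy : |y| < 1) :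
    ∑' k, arcsinCoeff k * y ^ (2 * k + 1) = arcsin y := by
  have key : EqOn (fun z => ∑' k, arcsinCoeff k * z ^ (2 * k + 1)) arcsin (Set.Ioo (-1) 1) := by
    refine eqOn_of_hasDerivAt_eq (d := fun z => 1 / √(1 - z ^ 2)) isOpen_Ioo isPreconnected_Ioo
      (fun z hz => ?_) (fun z hz => hasDerivAt_arcsin (by linarith [hz.1]) (by linarith [hz.2]))
      (by norm_num : (0 : ℝ) ∈ Set.Ioo (-1) 1) (by simp)
    have hz' : |z| < 1 := abs_lt.mpr hz
    refine (hasDerivAt_tsum_mul_pow_comp abs_arcsinCoeff_le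
      ((add_left_injective 1).comp (mul_right_injective₀ (two_ne_zero' ℕ))) hz').congr_deriv ?_
    rw [← eq_one_div_of_mul_eq_one_left (tsum_invSqrtCoeff_mul_sqrt hz')]
    refine tsum_congr fun k => ?_
    have : (2 * (k : ℝ) + 1) ≠ 0 := by positivity
    simp only [arcsinCoeff, comp_apply, Nat.add_sub_cancel]
    push_cast
    field_simp
  exact key (abs_lt.mp hy)

lemma tsum_arcsinSqCoeff_mul_sqrt {y : ℝ} (hy : |y| < 1) :
    (∑' k, arcsinSqCoeff k * y ^ (2 * k)) * √(1 - y ^ 2) = 2 * arcsin y ^ 2 := by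
  have key : EqOn (fun z => (∑' k, arcsinSqCoeff k * z ^ (2 * k)) * √(1 - z ^ 2))
      (fun z => 2 * arcsin z ^ 2) (Set.Ioo (-1) 1) := by
    refine eqOn_of_hasDerivAt_eq (d := fun z => 4 * arcsin z / √(1 - z ^ 2)) isOpen_Ioo
      isPreconnected_Ioo (fun z hz => ?_) (fun z hz => ?_)
      (by norm_num : (0 : ℝ) ∈ Set.Ioo (-1) 1)
      (by simp [tsum_mul_zero_pow_two_mul, arcsinSqCoeff_zero])
    · have h := hasDerivAt_evenSeries_mul_sqrt (r := fun k => 4 * arcsinCoeff k)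
        abs_arcsinSqCoeff_le (fun k => by
          rw [abs_mul, abs_of_pos four_pos]; linarith [abs_arcsinCoeff_le k])
        arcsinSqCoeff_recurrence (abs_lt.mpr hz)
      simp_rw [mul_assoc, tsum_mul_left, tsum_arcsinCoeff (abs_lt.mpr hz)] at h
      exact h
    · refine (((hasDerivAt_arcsin (by linarith [hz.1]) (by linarith [hz.2])).fun_pow 2).const_mul
        2).congr_deriv ?_
      simp only [Nat.cast_ofNat, Nat.add_one_sub_one, pow_one]
      ring
  exact key (abs_lt.mp hy)

theorem stmt5 (x : ℝ) (hx0 : 0 < x) (hx2 : x < 2) :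
    4 * (Real.arcsin (x / 2)) ^ 2 / Real.sqrt (4 - x ^ 2)
    = ∑' k : ℕ, (x / 2) ^ (2 * (k + 1)) * poch (1/2) (k+1) / poch 1 (k+1) *
        (4 * H2 (2 * (k + 1)) - H2 (k + 1)) := by
  have hy : |x / 2| < 1 := abs_lt.mpr ⟨by linarith, by linarith⟩
  set y := x / 2
  have hsqrt : √(4 - x ^ 2) = 2 * √(1 - y ^ 2) := by
    rw [show 4 - x ^ 2 = 2 ^ 2 * (1 - y ^ 2) by ring, sqrt_mul (by positivity), sqrt_sq two_pos.le]
  have hs : 0 < √(1 - y ^ 2) := sqrt_pos.mpr (by nlinarith [abs_lt.mp hy])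
  have hS : 4 * arcsin y ^ 2 / √(4 - x ^ 2) = ∑' k, arcsinSqCoeff k * y ^ (2 * k) := by
    rw [hsqrt, div_eq_iff (by positivity)]
    linear_combination -2 * tsum_arcsinSqCoeff_mul_sqrt hy
  rw [hS, (summable_mul_pow_comp abs_arcsinSqCoeff_le (mul_right_injective₀ (two_ne_zero' ℕ))
    hy).tsum_eq_zero_add, arcsinSqCoeff_zero, zero_mul, zero_add]
  exact tsum_congr fun k => by simp only [arcsinSqCoeff, invSqrtCoeff]; ring
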